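/- arXiv:1108.4178 — 2 statements merged into one kernel-verified Lean document; each statement's English description precedes it below -/
import Mathlib

section
/- For any prime p ≥ 7, the binomial coefficient C(2p-1, p-1) ≡ 1 - p²·∑_{k=1}^{p-1} 1/k² (mod p⁵). -/
/-!
Since `C(2p-1, p-1) = ∏ (1 + p/k)` and `∏ (1 - p/k) = ∏ (k - p)/k = 1` (reflect `k ↦ p - k`),
the binomial coefficient equals `∏_{k=1}^{p-1} (1 - p²/k²)`. Working in `ℤ_[p]` modulo `p⁵`,
cubic and higher terms of this product vanish, and the quadratic term is `p⁴ e₂`, where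
`2 e₂ = (∑ k⁻²)² - ∑ k⁻⁴` is divisible by `p`: for `p ≥ 7` both power sums vanish mod `p`,
as `∑_{x ∈ 𝔽_p} x^j = 0` for `0 < j < p - 1`.
-/

/-- `a ≡ b (mod p^n)` in the `p`-adic sense for rationals. -/
def PadicCong (p : ℕ) (n : ℕ) (a b : ℚ) : Prop :=
  padicNorm p (a - b) ≤ (p : ℚ) ^ (-(n : ℤ))

open Finset Nat

section Binomial

variable {R : Type*} [CommRing R]

lemma prod_Icc_one_id (n : ℕ) : ∏ k ∈ Icc 1 n, k = n ! := by
  rw [← Ico_add_one_right_eq_Icc, prod_Ico_id_eq_factorial]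

lemma choose_mul_factorial_eq_prod_Icc (n : ℕ) :
    (2 * n - 1).choose (n - 1) * (n - 1)! = ∏ k ∈ Icc 1 (n - 1), (n + k) := by
  rcases n with _ | m
  · simp
  rw [show 2 * (m + 1) - 1 = m + 1 + m by omega, Nat.add_sub_cancel, mul_comm,
    ← ascFactorial_eq_factorial_mul_choose, ascFactorial_eq_prod_range,
    ← Ico_add_one_right_eq_Icc, prod_Ico_eq_prod_range, Nat.add_sub_cancel]
  exact prod_congr rfl fun i _ => by ring

lemma prod_Icc_natCast_sub_of_odd {n : ℕ} (hn : Odd n) :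
    ∏ k ∈ Icc 1 (n - 1), ((k : R) - n) = (n - 1)! := by
  calc ∏ k ∈ Icc 1 (n - 1), ((k : R) - n)
      = ∏ k ∈ Icc 1 (n - 1), (-1) * ((n - k : ℕ) : R) :=
        prod_congr rfl fun k hk => by
          rw [Nat.cast_sub (by grind)]; ring
    _ = ∏ k ∈ Icc 1 (n - 1), ((n - k : ℕ) : R) := by
        rw [prod_mul_distrib, prod_const, card_Icc, Nat.add_sub_cancel,
          (Nat.Odd.sub_odd hn odd_one).neg_one_pow, one_mul]
    _ = (n - 1)! := by
        rw [← prod_Icc_one_id, Nat.cast_prod]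
        exact prod_nbij' (n - ·) (n - ·) (by grind) (by grind)
          (by grind) (by grind) fun _ _ => rfl

variable {n : ℕ} {v : ℕ → R}

lemma factorial_mul_prod_eq_one (hv : ∀ k ∈ Icc 1 (n - 1), (k : R) * v k = 1) :
    ((n - 1)! : R) * ∏ k ∈ Icc 1 (n - 1), v k = 1 := by
  rw [← prod_Icc_one_id, Nat.cast_prod, ← prod_mul_distrib]
  exact prod_eq_one hv

lemma natCast_choose_eq_prod_one_add (hv : ∀ k ∈ Icc 1 (n - 1), (k : R) * v k = 1) :
    ((2 * n - 1).choose (n - 1) : R) = ∏ k ∈ Icc 1 (n - 1), (1 + n * v k) := by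
  calc ((2 * n - 1).choose (n - 1) : R)
      = ((2 * n - 1).choose (n - 1) * (n - 1)! : ℕ) * ∏ k ∈ Icc 1 (n - 1), v k := by
        rw [Nat.cast_mul, mul_assoc, factorial_mul_prod_eq_one hv, mul_one]
    _ = ∏ k ∈ Icc 1 (n - 1), (1 + n * v k) := by
        rw [choose_mul_factorial_eq_prod_Icc, Nat.cast_prod, ← prod_mul_distrib]
        exact prod_congr rfl fun k hk => by push_cast; linear_combination hv k hk

lemma prod_one_sub_eq_one (hn : Odd n) (hv : ∀ k ∈ Icc 1 (n - 1), (k : R) * v k = 1) :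
    ∏ k ∈ Icc 1 (n - 1), (1 - n * v k) = 1 := by
  calc ∏ k ∈ Icc 1 (n - 1), (1 - n * v k)
      = (∏ k ∈ Icc 1 (n - 1), ((k : R) - n)) * ∏ k ∈ Icc 1 (n - 1), v k := by
        rw [← prod_mul_distrib]
        exact prod_congr rfl fun k hk => by linear_combination -hv k hk
    _ = 1 := by rw [prod_Icc_natCast_sub_of_odd hn, factorial_mul_prod_eq_one hv]

lemma natCast_choose_eq_prod_one_sub_sq (hn : Odd n)
    (hv : ∀ k ∈ Icc 1 (n - 1), (k : R) * v k = 1) :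
    ((2 * n - 1).choose (n - 1) : R) = ∏ k ∈ Icc 1 (n - 1), (1 - n ^ 2 * v k ^ 2) := by
  calc ((2 * n - 1).choose (n - 1) : R)
      = (∏ k ∈ Icc 1 (n - 1), (1 + n * v k)) * ∏ k ∈ Icc 1 (n - 1), (1 - n * v k) := by
        rw [natCast_choose_eq_prod_one_add hv, prod_one_sub_eq_one hn hv, mul_one]
    _ = ∏ k ∈ Icc 1 (n - 1), (1 - n ^ 2 * v k ^ 2) := by
        rw [← prod_mul_distrib]
        exact prod_congr rfl fun k _ => by ring

end Binomial

section Truncation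

variable {R : Type*} [CommRing R]

lemma two_mul_prod_one_add {a : ℕ → R} (ha : ∀ x y z, a x * a y * a z = 0) (s : Finset ℕ) :
    2 * ∏ k ∈ s, (1 + a k) = 2 + 2 * ∑ k ∈ s, a k + (∑ k ∈ s, a k) ^ 2 - ∑ k ∈ s, a k ^ 2 := by
  have h_sq_sum (x : ℕ) (t : Finset ℕ) : a x * (∑ k ∈ t, a k) ^ 2 = 0 := by
    simp only [sq, sum_mul, mul_sum, ← mul_assoc, ha, sum_const_zero]
  have h_sum_sq (x : ℕ) (t : Finset ℕ) : a x * ∑ k ∈ t, a k ^ 2 = 0 := by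
    simp only [mul_sum, sq, ← mul_assoc, ha, sum_const_zero]
  induction s using Finset.induction_on with
  | empty => simp
  | insert i t hi ih =>
    rw [prod_insert hi, sum_insert hi, sum_insert hi]
    linear_combination (1 + a i) * ih + h_sq_sum i t - h_sum_sq i t

lemma prod_one_sub_mul_sq_eq {π : R} (hπ : π ^ 5 = 0) (h2 : IsUnit (2 : R)) {u : ℕ → R}
    {s : Finset ℕ} (hu2 : π ∣ ∑ k ∈ s, u k ^ 2) (hu4 : π ∣ ∑ k ∈ s, u k ^ 4) :
    ∏ k ∈ s, (1 - π ^ 2 * u k ^ 2) = 1 - π ^ 2 * ∑ k ∈ s, u k ^ 2 := by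
  obtain ⟨c₂, hc₂⟩ := hu2
  obtain ⟨c₄, hc₄⟩ := hu4
  have h := two_mul_prod_one_add (a := fun k => -π ^ 2 * u k ^ 2)
    (fun x y z => by linear_combination (-π * u x ^ 2 * u y ^ 2 * u z ^ 2) * hπ) s
  simp only [neg_mul, ← sub_eq_add_neg, sum_neg_distrib, neg_sq, mul_pow, ← pow_mul, ← mul_sum]
    at h
  apply h2.mul_left_cancel
  linear_combination h + π ^ 4 * (∑ k ∈ s, u k ^ 2 + π * c₂) * hc₂ - π ^ 4 * hc₄
    + (π * c₂ ^ 2 - c₄) * hπ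

end Truncation

lemma ZMod.sum_eq_sum_range {M : Type*} [AddCommMonoid M] (n : ℕ) [NeZero n]
    (f : ZMod n → M) : ∑ x, f x = ∑ k ∈ range n, f k :=
  sum_nbij' ZMod.val (↑) (fun x _ => mem_range.2 x.val_lt) (fun _ _ => mem_univ _)
    (fun x _ => ZMod.natCast_zmod_val x) (fun _ hk => ZMod.val_cast_of_lt (mem_range.1 hk))
    (fun x _ => by rw [ZMod.natCast_zmod_val])

lemma ZMod.sum_Icc_inv_pow_eq_zero {p : ℕ} [Fact p.Prime] {j : ℕ} (hj₀ : 0 < j)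
    (hj : j < p - 1) : ∑ k ∈ Icc 1 (p - 1), ((k : ZMod p)⁻¹) ^ j = 0 := by
  have hp := (Fact.out : p.Prime).one_lt
  calc ∑ k ∈ Icc 1 (p - 1), ((k : ZMod p)⁻¹) ^ j
      = ∑ k ∈ range p, ((k : ZMod p)⁻¹) ^ j := by
        rw [range_eq_Ico, sum_eq_sum_Ico_succ_bot (by omega), Nat.cast_zero, inv_zero,
          zero_pow hj₀.ne', zero_add, ← Ico_add_one_right_eq_Icc, Nat.sub_add_cancel hp.le]
    _ = ∑ x : ZMod p, x ^ j := by
        rw [← ZMod.sum_eq_sum_range p fun x => x⁻¹ ^ j]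
        exact Fintype.sum_equiv (Equiv.inv _) _ _ fun _ => rfl
    _ = 0 := FiniteField.sum_pow_lt_card_sub_one (K := ZMod p) j (by rwa [ZMod.card])

namespace PadicInt

variable {p : ℕ} [Fact p.Prime]

lemma natCast_dvd_sum_pow {x : ℕ → ℤ_[p]} (hx : ∀ k ∈ Icc 1 (p - 1), (k : ℤ_[p]) * x k = 1)
    {j : ℕ} (hj₀ : 0 < j) (hj : j < p - 1) : (p : ℤ_[p]) ∣ ∑ k ∈ Icc 1 (p - 1), x k ^ j := by
  rw [← Ideal.mem_span_singleton, ← maximalIdeal_eq_span_p, ← ker_toZMod, RingHom.mem_ker,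
    ← ZMod.sum_Icc_inv_pow_eq_zero hj₀ hj, map_sum]
  refine sum_congr rfl fun k hk => ?_
  have hk' : (k : ZMod p) * toZMod (x k) = 1 := by simpa using congrArg toZMod (hx k hk)
  rw [map_pow, eq_inv_of_mul_eq_one_right hk']

lemma exists_mul_eq_one : ∃ x : ℕ → ℤ_[p], ∀ k ∈ Icc 1 (p - 1), (k : ℤ_[p]) * x k = 1 :=
  ⟨fun k => (k : ℤ_[p]).inv, fun k hk => mul_inv <| norm_natCast_eq_one_iff.2 <|
    Nat.coprime_of_lt_prime (by grind) (by grind) Fact.out⟩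

end PadicInt

lemma padicCong_of_toZModPow_eq_zero {p n : ℕ} [Fact p.Prime] {a b : ℚ} {x : ℤ_[p]}
    (hx : ((a - b : ℚ) : ℚ_[p]) = x) (h : PadicInt.toZModPow n x = 0) : PadicCong p n a b := by
  have : ‖x‖ ≤ (p : ℝ) ^ (-n : ℤ) := by
    rwa [PadicInt.norm_le_pow_iff_mem_span_pow, ← PadicInt.ker_toZModPow, RingHom.mem_ker]
  unfold PadicCong
  rw [PadicInt.norm_def, ← hx, Padic.eq_padicNorm] at this
  rw [← Rat.cast_le (K := ℝ)]
  push_cast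
  exact this

theorem stmt2 (p : ℕ) (hp : p.Prime) (h7 : 7 ≤ p) :
    PadicCong p 5 ((Nat.choose (2 * p - 1) (p - 1)) : ℚ) (1 - (p : ℚ) ^ 2 * (∑ k ∈ Finset.Icc 1 (p - 1), (1 : ℚ) / (k : ℚ) ^ 2)) := by
  have := Fact.mk hp
  obtain ⟨x, hx⟩ := PadicInt.exists_mul_eq_one (p := p)
  let v k := PadicInt.toZModPow 5 (x k)
  have hv : ∀ k ∈ Icc 1 (p - 1), (k : ZMod (p ^ 5)) * v k = 1 := fun k hk => by
    simpa using congrArg (PadicInt.toZModPow 5) (hx k hk)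
  have hpow : (p : ZMod (p ^ 5)) ^ 5 = 0 := by exact_mod_cast ZMod.natCast_self (p ^ 5)
  have hodd : Odd p := hp.odd_of_ne_two (by omega)
  have h2 : IsUnit (2 : ZMod (p ^ 5)) := by
    exact_mod_cast (ZMod.isUnit_iff_coprime 2 (p ^ 5)).2 (Nat.coprime_two_left.2 hodd.pow)
  have hdvd (j : ℕ) (hj₀ : 0 < j) (hj : j < p - 1) :
      (p : ZMod (p ^ 5)) ∣ ∑ k ∈ Icc 1 (p - 1), v k ^ j := by
    simpa using map_dvd (PadicInt.toZModPow 5) (PadicInt.natCast_dvd_sum_pow hx hj₀ hj)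
  refine padicCong_of_toZModPow_eq_zero
    (x := (2 * p - 1).choose (p - 1) - 1 + p ^ 2 * ∑ k ∈ Icc 1 (p - 1), x k ^ 2) ?_ ?_
  · have hx' : ∀ k ∈ Icc 1 (p - 1), ((x k : ℤ_[p]) : ℚ_[p]) ^ 2 = 1 / (k : ℚ_[p]) ^ 2 :=
      fun k hk => by
        have hk' : (k : ℚ_[p]) * x k = 1 := by
          exact_mod_cast congrArg ((↑) : ℤ_[p] → ℚ_[p]) (hx k hk)
        rw [one_div, ← inv_pow, eq_inv_of_mul_eq_one_right hk']
    push_cast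
    rw [PadicInt.coe_sum]
    simp only [PadicInt.coe_pow]
    rw [sum_congr rfl hx']
    ring
  · simp only [map_add, map_sub, map_mul, map_sum, map_pow, map_natCast, map_one]
    rw [natCast_choose_eq_prod_one_sub_sq hodd hv,
      prod_one_sub_mul_sq_eq hpow h2 (hdvd 2 (by omega) (by omega)) (hdvd 4 (by omega) (by omega))]
    ring
end

section
/- Let p be a Wolstenholme prime. Then C(2p-1, p-1) ≡ 1 - 2p·∑_{k=1}^{p-1} 1/k - 2p²·∑_{k=1}^{p-1} 1/k² (mod p⁷). -/
/-!
Pairing `k` with `p - k` turns `C(2p-1, p-1) = ∏_{0<k<p} (1 + p/k)` into `∏_{k ≤ (p-1)/2} (1 + x_k)`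
with `x_k = 2p²/(k(p-k)) ≡ 0 (mod p²)`. Modulo `p⁷` only `1 + e₁ + e₂ + e₃` of this product
survives, and by Newton's identities these are polynomials in the power sums
`E = ∑ x_k = 2pH₁`, `S = ∑ x_k² = 4p²H₂ + 8pH₁` and `T = ∑ x_k³`. The cube sum vanishes mod `p⁷`
because `(k(p-k))³ ≡ -k⁶ (mod p)` and `∑ 1/k⁶ ≡ 0 (mod p)` when `p - 1 ∤ 6`. A priori only
`E ≡ 0 (mod p²)`; since `C - 1 ≡ E + E²/2 (mod p⁴)`, the Wolstenholme hypothesis upgrades this to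
`E ≡ 0 (mod p⁴)`, which kills `E²/2` and `e₃` and leaves `C ≡ 1 + E - S/2 (mod p⁷)`.
The hypothesis also excludes `p = 2, 3, 7` directly.
-/

open Finset

section PadicBall

variable {p : ℕ} [hp : Fact p.Prime] {m n : ℕ} {x y u : ℚ}

def padicBall (p : ℕ) [Fact p.Prime] (n : ℕ) : AddSubgroup ℚ where
  carrier := {x | padicNorm p x ≤ (p : ℚ) ^ (-(n : ℤ))}
  add_mem' hx hy := padicNorm.nonarchimedean.trans (max_le hx hy)
  zero_mem' := by simp only [Set.mem_ofPred_eq, padicNorm.zero]; positivity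
  neg_mem' := by simp only [Set.mem_ofPred_eq, padicNorm.neg, imp_self, implies_true]

theorem mem_padicBall : x ∈ padicBall p n ↔ padicNorm p x ≤ (p : ℚ) ^ (-(n : ℤ)) := Iff.rfl

theorem padicCong_iff_sub_mem_padicBall {a b : ℚ} :
    PadicCong p n a b ↔ a - b ∈ padicBall p n := Iff.rfl

theorem padicBall_antitone : Antitone (padicBall p) := fun m n h x hx =>
  hx.trans <| zpow_le_zpow_right₀ (mod_cast hp.out.one_lt.le : (1 : ℚ) ≤ p) (by omega)

theorem mem_padicBall_zero : x ∈ padicBall p 0 ↔ padicNorm p x ≤ 1 := by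
  simp [mem_padicBall]

theorem natCast_mem_padicBall {a : ℕ} : (a : ℚ) ∈ padicBall p n ↔ p ^ n ∣ a := by
  rw [mem_padicBall, ← Int.cast_natCast, ← padicNorm.dvd_iff_norm_le, Int.natCast_dvd_natCast]

theorem intCast_mem_padicBall_zero (z : ℤ) : (z : ℚ) ∈ padicBall p 0 :=
  mem_padicBall_zero.2 (padicNorm.of_int z)

theorem ofNat_mem_padicBall_zero (a : ℕ) [a.AtLeastTwo] : (OfNat.ofNat a : ℚ) ∈ padicBall p 0 :=
  mem_padicBall_zero.2 (mod_cast padicNorm.of_nat a)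

theorem mul_mem_padicBall (hx : x ∈ padicBall p m) (hy : y ∈ padicBall p n) :
    x * y ∈ padicBall p (m + n) := by
  rw [mem_padicBall, padicNorm.mul, Nat.cast_add, neg_add, zpow_add₀ (mod_cast hp.out.ne_zero)]
  exact mul_le_mul hx hy (padicNorm.nonneg _) (by positivity)

theorem pow_mem_padicBall (hx : x ∈ padicBall p n) (k : ℕ) : x ^ k ∈ padicBall p (k * n) := by
  induction k with
  | zero => simp [mem_padicBall_zero]
  | succ k ih => simpa [pow_succ, add_mul] using mul_mem_padicBall ih hx

theorem natCast_pow_mem_padicBall (n : ℕ) : (p : ℚ) ^ n ∈ padicBall p n := by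
  exact_mod_cast natCast_mem_padicBall.2 dvd_rfl

theorem natCast_mem_padicBall_one : (p : ℚ) ∈ padicBall p 1 := by
  simpa using natCast_pow_mem_padicBall (p := p) 1

theorem ofNat_mul_mem_padicBall (a : ℕ) [a.AtLeastTwo] (hx : x ∈ padicBall p n) :
    (OfNat.ofNat a : ℚ) * x ∈ padicBall p n := by
  simpa using mul_mem_padicBall (ofNat_mem_padicBall_zero a) hx

theorem mul_mem_padicBall_iff_of_padicNorm_eq_one (hu : padicNorm p u = 1) :
    u * x ∈ padicBall p n ↔ x ∈ padicBall p n := by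
  rw [mem_padicBall, mem_padicBall, padicNorm.mul, hu, one_mul]

theorem div_mem_padicBall_iff_of_padicNorm_eq_one (hu : padicNorm p u = 1) :
    x / u ∈ padicBall p n ↔ x ∈ padicBall p n := by
  rw [mem_padicBall, mem_padicBall, padicNorm.div, hu, div_one]

theorem padicNorm_pow (x : ℚ) (k : ℕ) : padicNorm p (x ^ k) = padicNorm p x ^ k :=
  IsAbsoluteValue.abv_pow (padicNorm p) x k

theorem padicNorm_natCast_eq_one {k : ℕ} (hk : 0 < k) (hkp : k < p) : padicNorm p k = 1 :=
  (padicNorm.nat_eq_one_iff k).2 (Nat.not_dvd_of_pos_of_lt hk hkp)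

theorem padicNorm_natCast_sub_eq_one (hu : padicNorm p u = 1) : padicNorm p (p - u) = 1 := by
  have hlt : padicNorm p p < padicNorm p (-u) := by
    rw [padicNorm.padicNorm_p_of_prime, padicNorm.neg, hu]
    exact inv_lt_one_of_one_lt₀ (mod_cast hp.out.one_lt)
  rw [sub_eq_add_neg, padicNorm.add_eq_max_of_ne hlt.ne, max_eq_right hlt.le, padicNorm.neg, hu]

theorem inv_add_inv_mem_padicBall (hx : padicNorm p x = 1) (hy : padicNorm p y = 1)
    (hxy : x + y ∈ padicBall p n) : x⁻¹ + y⁻¹ ∈ padicBall p n := by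
  have hx0 : x ≠ 0 := fun h => by simp [h] at hx
  have hy0 : y ≠ 0 := fun h => by simp [h] at hy
  rw [inv_add_inv hx0 hy0, div_mem_padicBall_iff_of_padicNorm_eq_one
    (by rw [padicNorm.mul, hx, hy, one_mul])]
  exact add_comm x y ▸ hxy

end PadicBall

theorem natCast_ne_zero_of_mem_Icc {p k : ℕ} [hp : Fact p.Prime] (hk : k ∈ Icc 1 (p - 1)) :
    (k : ZMod p) ≠ 0 := by
  rw [Ne, ZMod.natCast_eq_zero_iff]
  exact Nat.not_dvd_of_pos_of_lt (mem_Icc.1 hk).1 (by have := hp.out.pos; grind)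

theorem sum_Icc_natCast_pow_inv_eq_zero {p : ℕ} [Fact p.Prime] {n : ℕ} (hn : ¬ (p - 1) ∣ n) :
    ∑ k ∈ Icc 1 (p - 1), ((k : ZMod p) ^ n)⁻¹ = 0 := by
  have hp := (Fact.out : p.Prime).one_lt
  have hunits : ∑ k ∈ Icc 1 (p - 1), ((k : ZMod p) ^ n)⁻¹ =
      ∑ u : (ZMod p)ˣ, ((u : ZMod p) ^ n)⁻¹ :=
    sum_bij' (fun k hk ↦ Units.mk0 (k : ZMod p) (natCast_ne_zero_of_mem_Icc hk))
      (fun u _ ↦ (u : ZMod p).val)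
      (fun _ _ ↦ mem_univ _)
      (fun u _ ↦ by grind [u.ne_zero, ZMod.val_ne_zero, ZMod.val_lt])
      (fun k hk ↦ by simp [ZMod.val_cast_of_lt (show k < p by grind)])
      (fun u _ ↦ Units.ext (ZMod.natCast_zmod_val _))
      (fun _ _ ↦ rfl)
  rw [hunits, ← Equiv.sum_comp (Equiv.inv (ZMod p)ˣ)]
  simp only [Equiv.inv_apply, Units.val_inv_eq_inv_val, inv_pow, inv_inv]
  rw [FiniteField.sum_pow_units, ZMod.card, if_neg hn]

theorem sum_one_div_pow_mem_padicBall_one {p : ℕ} [hp : Fact p.Prime] {n : ℕ}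
    (hn : ¬ (p - 1) ∣ n) : ∑ k ∈ Icc 1 (p - 1), 1 / (k : ℚ) ^ n ∈ padicBall p 1 := by
  set F := (p - 1).factorial
  have hF : ∀ k ∈ Icc 1 (p - 1), k ∣ F := fun k hk =>
    Nat.dvd_factorial (mem_Icc.1 hk).1 (mem_Icc.1 hk).2
  have hsum : ∑ k ∈ Icc 1 (p - 1), 1 / (k : ℚ) ^ n =
      ((∑ k ∈ Icc 1 (p - 1), (F / k) ^ n : ℕ) : ℚ) / (F : ℚ) ^ n := by
    push_cast
    rw [sum_div]
    refine sum_congr rfl fun k hk => ?_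
    have hk0 : (k : ℚ) ≠ 0 := mod_cast Nat.one_le_iff_ne_zero.1 (mem_Icc.1 hk).1
    have hF0 : (F : ℚ) ≠ 0 := mod_cast (Nat.factorial_pos _).ne'
    rw [Nat.cast_div (hF k hk) hk0]
    field_simp
    rw [← mul_pow, mul_div_cancel₀ _ hk0]
  have hdvd : p ∣ ∑ k ∈ Icc 1 (p - 1), (F / k) ^ n := by
    rw [← ZMod.natCast_eq_zero_iff]
    push_cast
    have hterm : ∀ k ∈ Icc 1 (p - 1),
        ((F / k : ℕ) : ZMod p) ^ n = (F : ZMod p) ^ n * ((k : ZMod p) ^ n)⁻¹ := by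
      intro k hk
      have hdiv : ((F / k : ℕ) : ZMod p) = F * (k : ZMod p)⁻¹ := by
        rw [eq_mul_inv_iff_mul_eq₀ (natCast_ne_zero_of_mem_Icc hk), ← Nat.cast_mul,
          Nat.div_mul_cancel (hF k hk)]
      rw [hdiv, mul_pow, inv_pow]
    rw [sum_congr rfl hterm, ← mul_sum, sum_Icc_natCast_pow_inv_eq_zero hn, mul_zero]
  have hFnorm : padicNorm p ((F : ℚ) ^ n) = 1 := by
    rw [padicNorm_pow, (padicNorm.nat_eq_one_iff _).2, one_pow]
    exact fun h => absurd (hp.out.dvd_factorial.1 h) (by have := hp.out.pos; omega)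
  rw [hsum, div_mem_padicBall_iff_of_padicNorm_eq_one hFnorm]
  exact natCast_mem_padicBall.2 (by simpa using hdvd)

theorem cast_add_choose_eq_prod {K : Type*} [Field K] [CharZero K] (a n : ℕ) :
    ((a + n).choose n : K) = ∏ k ∈ Icc 1 n, (1 + (a : K) / k) := by
  induction n with
  | zero => simp
  | succ n ih =>
    rw [prod_Icc_succ_top (by omega), ← ih, ← add_assoc]
    have h : ((a + n + 1 : ℕ) : K) * (a + n).choose n = (a + n + 1).choose (n + 1) * (n + 1 : ℕ) :=
      mod_cast Nat.add_one_mul_choose_eq (a + n) n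
    have hn : ((n + 1 : ℕ) : K) ≠ 0 := Nat.cast_ne_zero.2 n.succ_ne_zero
    push_cast at h hn ⊢
    field_simp
    linear_combination -h

@[to_additive]
theorem prod_Icc_pred_eq_prod_mul_reflect {M : Type*} [CommMonoid M] {p m : ℕ}
    (hm : p = 2 * m + 1) (f : ℕ → M) :
    ∏ k ∈ Icc 1 (p - 1), f k = ∏ k ∈ Icc 1 m, (f k * f (p - k)) := by
  have hupper : ∏ k ∈ Ioc m (p - 1), f k = ∏ k ∈ Icc 1 m, f (p - k) :=
    prod_nbij' (p - ·) (p - ·) (fun k hk => by simp only [mem_Ioc, mem_Icc] at hk ⊢; omega)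
      (fun k hk => by simp only [mem_Ioc, mem_Icc] at hk ⊢; omega)
      (fun k hk => by simp only [mem_Ioc] at hk; omega)
      (fun k hk => by simp only [mem_Icc] at hk; omega)
      (fun k hk => by simp only [mem_Ioc] at hk; congr; omega)
  have hIoc (n : ℕ) : Icc 1 n = Ioc 0 n := Icc_add_one_left_eq_Ioc 0 n
  rw [prod_mul_distrib, ← hupper, hIoc, hIoc, prod_Ioc_consecutive f (Nat.zero_le m) (by omega)]

section Expansion

variable {p : ℕ} [Fact p.Prime] {n : ℕ}

/-- `esymmThree a b c` and `esymmTrunc a b c` are `e₃` and `1 + e₁ + e₂ + e₃` of a family whose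
power sums of degree `1`, `2`, `3` are `a`, `b`, `c` (Newton's identities). -/
def esymmThree (a b c : ℚ) : ℚ := (a ^ 3 - 3 * a * b + 2 * c) / 6

def esymmTrunc (a b c : ℚ) : ℚ := 1 + a + (a ^ 2 - b) / 2 + esymmThree a b c

theorem esymmThree_mem_padicBall (h6 : padicNorm p 6 = 1) {a b c : ℚ}
    (ha : a ^ 3 ∈ padicBall p n) (hab : a * b ∈ padicBall p n) (hc : c ∈ padicBall p n) :
    esymmThree a b c ∈ padicBall p n := by
  rw [esymmThree, div_mem_padicBall_iff_of_padicNorm_eq_one h6, mul_assoc]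
  exact add_mem (sub_mem ha (ofNat_mul_mem_padicBall 3 hab)) (ofNat_mul_mem_padicBall 2 hc)

theorem prod_one_add_sub_esymmTrunc_mem_padicBall {ι : Type*} (h6 : padicNorm p 6 = 1)
    {s : Finset ι} {f : ι → ℚ} {d : ℕ} (hf : ∀ i ∈ s, f i ∈ padicBall p d) :
    ∏ i ∈ s, (1 + f i) - esymmTrunc (∑ i ∈ s, f i) (∑ i ∈ s, f i ^ 2) (∑ i ∈ s, f i ^ 3) ∈
      padicBall p (4 * d) := by
  classical
  induction s using Finset.induction_on with
  | empty => simp [esymmTrunc, esymmThree]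
  | @insert j s hj ih =>
    rw [prod_insert hj, sum_insert hj, sum_insert hj, sum_insert hj]
    set A := ∑ i ∈ s, f i
    set B := ∑ i ∈ s, f i ^ 2
    set C := ∑ i ∈ s, f i ^ 3
    have hfs : ∀ i ∈ s, f i ∈ padicBall p d := fun i hi => hf i (mem_insert_of_mem hi)
    have hfj : f j ∈ padicBall p d := hf j (mem_insert_self j s)
    have hA : A ∈ padicBall p d := sum_mem hfs
    have he : esymmThree A B C ∈ padicBall p (3 * d) := by
      refine esymmThree_mem_padicBall h6 (pow_mem_padicBall hA 3) ?_
        (sum_mem fun i hi => pow_mem_padicBall (hfs i hi) 3)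
      exact padicBall_antitone (by omega)
        (mul_mem_padicBall hA (sum_mem fun i hi => pow_mem_padicBall (hfs i hi) 2))
    have hone : 1 + f j ∈ padicBall p 0 :=
      add_mem (by simp [mem_padicBall_zero]) (padicBall_antitone (Nat.zero_le d) hfj)
    have key : (1 + f j) * ∏ i ∈ s, (1 + f i) - esymmTrunc (f j + A) (f j ^ 2 + B) (f j ^ 3 + C) =
        (1 + f j) * (∏ i ∈ s, (1 + f i) - esymmTrunc A B C) + f j * esymmThree A B C := by
      simp only [esymmTrunc, esymmThree]
      ring
    rw [key]
    exact add_mem (padicBall_antitone (by omega) (mul_mem_padicBall hone (ih hfs)))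
      (padicBall_antitone (by omega) (mul_mem_padicBall hfj he))

variable {C E S T : ℚ}

theorem mem_padicBall_four_of_sub_esymmTrunc (h2 : padicNorm p 2 = 1) (h6 : padicNorm p 6 = 1)
    (hC : C - 1 ∈ padicBall p 4) (hR : C - esymmTrunc E S T ∈ padicBall p 4)
    (hE : E ∈ padicBall p 2) (hS : S ∈ padicBall p 4) (hT : T ∈ padicBall p 6) :
    E ∈ padicBall p 4 := by
  have he : esymmThree E S T ∈ padicBall p 6 :=
    esymmThree_mem_padicBall h6 (padicBall_antitone (by omega) (pow_mem_padicBall hE 3))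
      (padicBall_antitone (by omega) (mul_mem_padicBall hE hS)) hT
  have hE2 : E ^ 2 / 2 ∈ padicBall p 4 :=
    (div_mem_padicBall_iff_of_padicNorm_eq_one h2).2 (pow_mem_padicBall hE 2)
  have hS2 : S / 2 ∈ padicBall p 4 := (div_mem_padicBall_iff_of_padicNorm_eq_one h2).2 hS
  rw [show E = (C - 1) - (C - esymmTrunc E S T) - E ^ 2 / 2 + S / 2 - esymmThree E S T by
    simp only [esymmTrunc]; ring]
  exact sub_mem (add_mem (sub_mem (sub_mem hC hR) hE2) hS2) (padicBall_antitone (by omega) he)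

theorem sub_one_add_sub_half_mem_padicBall_seven (h2 : padicNorm p 2 = 1)
    (h6 : padicNorm p 6 = 1) (hR : C - esymmTrunc E S T ∈ padicBall p 7)
    (hE : E ∈ padicBall p 4) (hS : S ∈ padicBall p 4) (hT : T ∈ padicBall p 7) :
    C - (1 + E - S / 2) ∈ padicBall p 7 := by
  have he : esymmThree E S T ∈ padicBall p 7 :=
    esymmThree_mem_padicBall h6 (padicBall_antitone (by omega) (pow_mem_padicBall hE 3))
      (padicBall_antitone (by omega) (mul_mem_padicBall hE hS)) hT
  have hE2 : E ^ 2 / 2 ∈ padicBall p 7 := (div_mem_padicBall_iff_of_padicNorm_eq_one h2).2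
    (padicBall_antitone (by omega) (pow_mem_padicBall hE 2))
  rw [show C - (1 + E - S / 2) = (C - esymmTrunc E S T) + E ^ 2 / 2 + esymmThree E S T by
    simp only [esymmTrunc]; ring]
  exact add_mem (add_mem hR hE2) he

end Expansion

section Pairs

variable {p m : ℕ}

/-- `(1 + p / k) * (1 + p / (p - k)) = 1 + pairTerm p k`. -/
def pairTerm (p k : ℕ) : ℚ := 2 * (p : ℚ) ^ 2 / (k * ((p : ℚ) - k))

theorem inv_mul_sub_pow_three_add_inv_pow_six_mem [Fact p.Prime] {a : ℕ} (ha : 0 < a)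
    (hap : a < p) : (((a : ℚ) * (p - a)) ^ 3)⁻¹ + ((a : ℚ) ^ 6)⁻¹ ∈ padicBall p 1 := by
  have hna : padicNorm p a = 1 := padicNorm_natCast_eq_one ha hap
  have hnb : padicNorm p (p - a) = 1 := padicNorm_natCast_sub_eq_one hna
  refine inv_add_inv_mem_padicBall (by simp [padicNorm_pow, padicNorm.mul, hna, hnb])
    (by simp [padicNorm_pow, hna]) ?_
  have h : ((a : ℚ) * (p - a)) ^ 3 + (a : ℚ) ^ 6 =
      p * ((a ^ 3 * (p ^ 2 - 3 * p * a + 3 * a ^ 2) : ℤ) : ℚ) := by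
    push_cast
    ring
  rw [h]
  exact mul_mem_padicBall (n := 0) natCast_mem_padicBall_one (intCast_mem_padicBall_zero _)

theorem cast_choose_eq_prod_one_add_pairTerm (hm : p = 2 * m + 1) :
    (((2 * p - 1).choose (p - 1) : ℕ) : ℚ) = ∏ k ∈ Icc 1 m, (1 + pairTerm p k) := by
  rw [show 2 * p - 1 = p + (p - 1) by omega, cast_add_choose_eq_prod,
    prod_Icc_pred_eq_prod_mul_reflect hm]
  refine prod_congr rfl fun k hk => ?_
  obtain ⟨hk1, hkm⟩ := mem_Icc.1 hk
  have hk0 : (k : ℚ) ≠ 0 := by norm_cast; omega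
  have hpk : (p : ℚ) - k ≠ 0 := by rw [← Nat.cast_sub (by omega)]; norm_cast; omega
  rw [pairTerm, Nat.cast_sub (by omega)]
  field_simp
  ring

theorem sum_pairTerm_eq (hm : p = 2 * m + 1) :
    ∑ k ∈ Icc 1 m, pairTerm p k = 2 * p * ∑ k ∈ Icc 1 (p - 1), 1 / (k : ℚ) := by
  rw [sum_Icc_pred_eq_sum_add_reflect hm, mul_sum]
  refine sum_congr rfl fun k hk => ?_
  obtain ⟨hk1, hkm⟩ := mem_Icc.1 hk
  have hk0 : (k : ℚ) ≠ 0 := by norm_cast; omega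
  have hpk : (p : ℚ) - k ≠ 0 := by rw [← Nat.cast_sub (by omega)]; norm_cast; omega
  rw [pairTerm, Nat.cast_sub (by omega)]
  field_simp
  ring

theorem sum_pairTerm_sq_eq (hm : p = 2 * m + 1) :
    ∑ k ∈ Icc 1 m, pairTerm p k ^ 2 =
      4 * p ^ 2 * ∑ k ∈ Icc 1 (p - 1), 1 / (k : ℚ) ^ 2 +
        8 * p * ∑ k ∈ Icc 1 (p - 1), 1 / (k : ℚ) := by
  rw [sum_Icc_pred_eq_sum_add_reflect hm, sum_Icc_pred_eq_sum_add_reflect hm, mul_sum,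
    mul_sum, ← sum_add_distrib]
  refine sum_congr rfl fun k hk => ?_
  obtain ⟨hk1, hkm⟩ := mem_Icc.1 hk
  have hk0 : (k : ℚ) ≠ 0 := by norm_cast; omega
  have hpk : (p : ℚ) - k ≠ 0 := by rw [← Nat.cast_sub (by omega)]; norm_cast; omega
  rw [pairTerm, Nat.cast_sub (by omega)]
  field_simp
  ring

theorem pairTerm_mem_padicBall_two [Fact p.Prime] {k : ℕ} (hk0 : 0 < k) (hkp : k < p) :
    pairTerm p k ∈ padicBall p 2 := by
  have hnk : padicNorm p k = 1 := padicNorm_natCast_eq_one hk0 hkp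
  rw [pairTerm, div_mem_padicBall_iff_of_padicNorm_eq_one
    (by rw [padicNorm.mul, hnk, padicNorm_natCast_sub_eq_one hnk, one_mul])]
  exact ofNat_mul_mem_padicBall 2 (natCast_pow_mem_padicBall 2)

theorem sum_pairTerm_pow_three_mem_padicBall_seven [hp : Fact p.Prime] (hm : p = 2 * m + 1)
    (h6 : ¬ (p - 1) ∣ 6) : ∑ k ∈ Icc 1 m, pairTerm p k ^ 3 ∈ padicBall p 7 := by
  set U := ∑ k ∈ Icc 1 m, (((k : ℚ) * (p - k)) ^ 3)⁻¹
  have h2U : 2 * U + ∑ k ∈ Icc 1 (p - 1), 1 / (k : ℚ) ^ 6 ∈ padicBall p 1 := by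
    rw [sum_Icc_pred_eq_sum_add_reflect hm, mul_sum, ← sum_add_distrib]
    refine sum_mem fun k hk => ?_
    obtain ⟨hk1, hkm⟩ := mem_Icc.1 hk
    convert add_mem (inv_mul_sub_pow_three_add_inv_pow_six_mem (p := p) (a := k) hk1 (by omega))
      (inv_mul_sub_pow_three_add_inv_pow_six_mem (p := p) (a := p - k) (by omega) (by omega))
      using 1
    push_cast [Nat.cast_sub (show k ≤ p by omega)]
    ring
  have hU : U ∈ padicBall p 1 := by
    have h2 : padicNorm p 2 = 1 := by
      exact_mod_cast padicNorm_natCast_eq_one (p := p) two_pos (by have := hp.out.two_le; omega)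
    rw [← mul_mem_padicBall_iff_of_padicNorm_eq_one h2]
    simpa using sub_mem h2U (sum_one_div_pow_mem_padicBall_one h6)
  have hT : ∑ k ∈ Icc 1 m, pairTerm p k ^ 3 = 8 * (p ^ 6 * U) := by
    rw [mul_sum, mul_sum]
    refine sum_congr rfl fun k _ => ?_
    rw [pairTerm, div_pow, div_eq_mul_inv]
    ring
  have h7 : (p : ℚ) ^ 6 * U ∈ padicBall p (6 + 1) :=
    mul_mem_padicBall (natCast_pow_mem_padicBall 6) hU
  rw [hT]
  exact ofNat_mul_mem_padicBall 8 h7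

end Pairs

theorem five_le_of_not_sub_one_dvd_six {p : ℕ} (hp : p.Prime) (h6 : ¬ (p - 1) ∣ 6) : 5 ≤ p := by
  by_contra! hlt
  have := hp.two_le
  interval_cases p <;> norm_num at h6

theorem cast_choose_sub_mem_padicBall_seven {p : ℕ} [hp : Fact p.Prime] (h6 : ¬ (p - 1) ∣ 6)
    (hw : (((2 * p - 1).choose (p - 1) : ℕ) : ℚ) - 1 ∈ padicBall p 4) :
    (((2 * p - 1).choose (p - 1) : ℕ) : ℚ) - (1 - 2 * p * ∑ k ∈ Icc 1 (p - 1), 1 / (k : ℚ) -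
      2 * p ^ 2 * ∑ k ∈ Icc 1 (p - 1), 1 / (k : ℚ) ^ 2) ∈ padicBall p 7 := by
  have hp5 := five_le_of_not_sub_one_dvd_six hp.out h6
  obtain ⟨m, hm⟩ : ∃ m, p = 2 * m + 1 := hp.out.odd_of_ne_two (by omega)
  have h2 : padicNorm p 2 = 1 := by exact_mod_cast padicNorm_natCast_eq_one two_pos (by omega)
  have h6' : padicNorm p 6 = 1 := by
    rw [show (6 : ℚ) = 2 * 3 by norm_num, padicNorm.mul, h2, one_mul]
    exact_mod_cast padicNorm_natCast_eq_one (p := p) three_pos (by omega)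
  have hx : ∀ k ∈ Icc 1 m, pairTerm p k ∈ padicBall p 2 := fun k hk =>
    pairTerm_mem_padicBall_two (mem_Icc.1 hk).1 (by grind)
  have hR := prod_one_add_sub_esymmTrunc_mem_padicBall (d := 2) h6' hx
  rw [← cast_choose_eq_prod_one_add_pairTerm hm] at hR
  have hS₄ : ∑ k ∈ Icc 1 m, pairTerm p k ^ 2 ∈ padicBall p 4 :=
    sum_mem fun k hk => pow_mem_padicBall (hx k hk) 2
  have hT₇ := sum_pairTerm_pow_three_mem_padicBall_seven hm h6
  have hE₄ := mem_padicBall_four_of_sub_esymmTrunc h2 h6' hw (padicBall_antitone (by omega) hR)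
    (sum_mem hx) hS₄ (padicBall_antitone (by omega) hT₇)
  have := sub_one_add_sub_half_mem_padicBall_seven h2 h6' (padicBall_antitone (by omega) hR) hE₄
    hS₄ hT₇
  rw [sum_pairTerm_eq hm, sum_pairTerm_sq_eq hm] at this
  convert this using 2
  ring

theorem not_sub_one_dvd_six_of_wolstenholme {p : ℕ} [hp : Fact p.Prime]
    (hw : (((2 * p - 1).choose (p - 1) : ℕ) : ℚ) - 1 ∈ padicBall p 4) : ¬ (p - 1) ∣ 6 := by
  have hdvd : p ^ 4 ∣ (2 * p - 1).choose (p - 1) - 1 := by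
    rw [← natCast_mem_padicBall, Nat.cast_sub (Nat.choose_pos (by omega)), Nat.cast_one]
    exact hw
  intro h
  have : p ≤ 7 := by have := Nat.le_of_dvd (by norm_num) h; omega
  interval_cases p <;> revert h hdvd <;> decide

theorem stmt11 (p : ℕ) (hp : p.Prime)
    (hw : PadicCong p 4 ((Nat.choose (2 * p - 1) (p - 1)) : ℚ) 1) :
    PadicCong p 7 ((Nat.choose (2 * p - 1) (p - 1)) : ℚ)
      (1 - 2 * (p : ℚ) * (∑ k ∈ Finset.Icc 1 (p - 1), (1 : ℚ) / (k : ℚ)) - 2 * (p : ℚ) ^ 2 * (∑ k ∈ Finset.Icc 1 (p - 1), (1 : ℚ) / (k : ℚ) ^ 2)) := by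
  have := Fact.mk hp
  rw [padicCong_iff_sub_mem_padicBall] at hw ⊢
  exact cast_choose_sub_mem_padicBall_seven (not_sub_one_dvd_six_of_wolstenholme hw) hw
end
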